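/- Let φ be a T-formula and let {C_1,...,C_K} be a set of T-lemmas ruling out ITTA(¬φ). Define Text(φ) := φ ∨ ¬(⋀_l C_l). Then: (i) Text(φ) ≡_T φ; (ii) φ ⊨_p Text(φ); (iii) Text(φ) is T-extended. -/
import Mathlib

/-- Total assignments ν : α → Bool satisfying φ that are theory-consistent. -/
def CTTA {α : Type*} (Tsat : (α → Bool) → Prop) (φ : Set (α → Bool)) : Set (α → Bool) :=
  {ν | ν ∈ φ ∧ Tsat ν}

/-- Total assignments ν : α → Bool satisfying φ that are theory-inconsistent. -/
def ITTA {α : Type*} (Tsat : (α → Bool) → Prop) (φ : Set (α → Bool)) : Set (α → Bool) :=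
  {ν | ν ∈ φ ∧ ¬ Tsat ν}

theorem text_properties
    {α : Type*} [Fintype α] (Tsat : (α → Bool) → Prop) (φ : Set (α → Bool))
    (K : ℕ) (C : Fin K → Set (α → Bool))
    (hlemma : ∀ l ν, Tsat ν → ν ∈ C l)
    (hrule : ∀ ν ∈ ITTA Tsat φᶜ, ∃ l, ν ∉ C l) :
    (∀ ν, Tsat ν → (ν ∈ φ ∪ (⋂ l, C l)ᶜ ↔ ν ∈ φ)) ∧
    (∀ ν, ν ∈ φ → ν ∈ φ ∪ (⋂ l, C l)ᶜ) ∧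
    ITTA Tsat (φ ∪ (⋂ l, C l)ᶜ)ᶜ = ∅ := by
  refine ⟨fun ν hT => ⟨fun h => ?_, fun h => Or.inl h⟩, fun ν h => Or.inl h, ?_⟩
  · rcases h with h | h
    · exact h
    · exact absurd (Set.mem_iInter.mpr fun l => hlemma l ν hT) h
  · ext ν
    simp only [ITTA, Set.mem_setOf_eq, Set.mem_empty_iff_false, iff_false, not_and,
      Set.mem_compl_iff, Set.mem_union, not_or, not_not]
    rintro ⟨hφ, hC⟩
    by_contra hT
    obtain ⟨l, hl⟩ := hrule ν ⟨hφ, hT⟩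
    exact hl (Set.mem_iInter.mp hC l)
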